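/- Let P_n(x) = det(xI − C(C_n)) be the characteristic polynomial of the ancestral matrix of the binary caterpillar C_n. Then P_1(x) = x, P_2(x) = (x−1)², and for n ≥ 3, P_n(x) = (2x − 3)·P_{n−1}(x) − (x − 1)²·P_{n−2}(x). -/
import Mathlib


open Matrix

/-- A rooted tree on a finite vertex type `V`, encoded by its root and the
parent function: the root is its own parent, and iterating the parent function
from any vertex eventually reaches the root.  (These conditions force the graph
whose edges join each non-root vertex to its parent to be a tree.) -/
structure TreeOn (V : Type) [Fintype V] [DecidableEq V] where
  root : V
  parent : V → V
  parent_root : parent root = root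
  reaches : ∀ v, ∃ k, parent^[k] v = root

namespace TreeOn

variable {V : Type} [Fintype V] [DecidableEq V]

/-- `u` is a (weak) ancestor of `v`: some iterate of the parent function sends
`v` to `u`.  (Any ancestor is reached within `Fintype.card V` steps, so the
bound makes the predicate decidable without changing its meaning.) -/
def IsAncestor (T : TreeOn V) (u v : V) : Prop :=
  ∃ k, k ≤ Fintype.card V ∧ T.parent^[k] v = u

instance (T : TreeOn V) (u v : V) : Decidable (T.IsAncestor u v) := by
  have h : T.IsAncestor u v ↔ ∃ k ∈ Finset.range (Fintype.card V + 1), T.parent^[k] v = u := by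
    simp [IsAncestor, Nat.lt_succ_iff]
  rw [h]; infer_instance

/-- The level of a vertex: its distance to the root. -/
def level (T : TreeOn V) (v : V) : ℕ := Nat.find (T.reaches v)

/-- The ancestral level `ℓ(v ∨ w)`: the level of the lowest common ancestor
of `v` and `w`, i.e. the greatest level of a common ancestor. -/
def lcaLevel (T : TreeOn V) (v w : V) : ℕ :=
  (Finset.univ.filter fun u => T.IsAncestor u v ∧ T.IsAncestor u w).sup T.level

/-- A leaf is a vertex with no children. -/
def IsLeaf (T : TreeOn V) (v : V) : Prop := ∀ u, T.parent u = v → u = v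

instance (T : TreeOn V) : DecidablePred T.IsLeaf := fun v =>
  inferInstanceAs (Decidable (∀ u, T.parent u = v → u = v))

/-- The type of leaves of `T`. -/
abbrev Leaf (T : TreeOn V) := {v : V // T.IsLeaf v}

/-- The ancestral matrix `C(T)`, indexed by the leaves of `T`, whose
`(v, w)` entry is the ancestral level `ℓ(v ∨ w)`. -/
noncomputable def ancMatrix (T : TreeOn V) : Matrix T.Leaf T.Leaf ℝ :=
  Matrix.of fun v w => (T.lcaLevel v.1 w.1 : ℝ)

/-- The ancestral spectral radius `ρ_C(T)`: the largest eigenvalue of `C(T)`. -/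
noncomputable def rhoC (T : TreeOn V) : ℝ :=
  sSup {μ : ℝ | ∃ x : T.Leaf → ℝ, x ≠ 0 ∧ T.ancMatrix.mulVec x = μ • x}

/-- The underlying simple graph of the tree: each non-root vertex is joined
to its parent. -/
def graph (T : TreeOn V) : SimpleGraph V :=
  SimpleGraph.fromRel fun u v => T.parent u = v ∧ u ≠ v

/-- The number of children (outdegree) of a vertex. -/
def childCount (T : TreeOn V) (v : V) : ℕ :=
  (Finset.univ.filter fun u => T.parent u = v ∧ u ≠ v).card

end TreeOn

namespace TreeOn

variable {V : Type} [Fintype V] [DecidableEq V]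

/-- A rooted caterpillar: the internal (non-leaf) vertices are pairwise
comparable with respect to the ancestor relation, i.e. removing all leaves
yields a path with the root at one end. -/
def IsCaterpillar (T : TreeOn V) : Prop :=
  ∀ v w : V, ¬ T.IsLeaf v → ¬ T.IsLeaf w → T.IsAncestor v w ∨ T.IsAncestor w v

/-- The binary caterpillar `C_n`: a rooted caterpillar in which every internal
vertex has exactly two children. -/
def IsBinaryCaterpillar (T : TreeOn V) : Prop :=
  T.IsCaterpillar ∧ ∀ v, ¬ T.IsLeaf v → T.childCount v = 2

end TreeOn

namespace TreeOn

variable {V : Type} [Fintype V] [DecidableEq V] (T : TreeOn V)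

lemma iterate_root (k : ℕ) : T.parent^[k] T.root = T.root :=
  Function.iterate_fixed T.parent_root k

lemma eq_root_of_parent_eq {v : V} (h : T.parent v = v) : v = T.root := by
  obtain ⟨k, hk⟩ := T.reaches v
  rw [Function.iterate_fixed h k] at hk
  exact hk

lemma iterate_level_spec (v : V) : T.parent^[T.level v] v = T.root :=
  Nat.find_spec (T.reaches v)

lemma level_le {v : V} {k : ℕ} (h : T.parent^[k] v = T.root) : T.level v ≤ k :=
  Nat.find_le h

lemma level_root : T.level T.root = 0 :=
  Nat.le_zero.mp (T.level_le (by simp))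

lemma eq_root_of_level_eq_zero {v : V} (h : T.level v = 0) : v = T.root := by
  have := T.iterate_level_spec v
  rwa [h, Function.iterate_zero_apply] at this

lemma level_parent {v : V} (hv : v ≠ T.root) : T.level (T.parent v) + 1 = T.level v := by
  have h1 : 1 ≤ T.level v := by
    rcases Nat.eq_zero_or_pos (T.level v) with h | h
    · exact absurd (T.eq_root_of_level_eq_zero h) hv
    · exact h
  have h2 : T.level (T.parent v) ≤ T.level v - 1 := by
    apply T.level_le
    have := T.iterate_level_spec v
    rwa [show T.level v = (T.level v - 1) + 1 by omega, Function.iterate_succ_apply] at this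
  have h3 : T.level v ≤ T.level (T.parent v) + 1 := by
    apply T.level_le
    rw [Function.iterate_succ_apply]
    exact T.iterate_level_spec (T.parent v)
  omega

lemma level_iterate (k : ℕ) (v : V) : T.level (T.parent^[k] v) = T.level v - k := by
  induction k generalizing v with
  | zero => simp
  | succ k ih =>
    rw [Function.iterate_succ_apply]
    rcases eq_or_ne v T.root with rfl | hv
    · rw [T.parent_root, ih, T.level_root]; omega
    · rw [ih]
      have := T.level_parent hv
      omega

lemma level_lt_card (v : V) : T.level v < Fintype.card V := by
  have hinj : Function.Injective (fun i : Fin (T.level v + 1) => T.parent^[i.val] v) := by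
    intro i j h
    have h' : T.parent^[i.val] v = T.parent^[j.val] v := h
    have hi := T.level_iterate i.val v
    have hj := T.level_iterate j.val v
    rw [h', hj] at hi
    have hi' := i.isLt
    have hj' := j.isLt
    exact Fin.ext (by omega)
  have := Fintype.card_le_of_injective _ hinj
  rw [Fintype.card_fin] at this
  omega

lemma isAncestor_iff {u v : V} : T.IsAncestor u v ↔ ∃ k, T.parent^[k] v = u := by
  constructor
  · rintro ⟨k, -, hk⟩; exact ⟨k, hk⟩
  · rintro ⟨k, hk⟩
    rcases le_or_gt k (T.level v) with h | h
    · exact ⟨k, le_of_lt (lt_of_le_of_lt h (T.level_lt_card v)), hk⟩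
    · refine ⟨T.level v, le_of_lt (T.level_lt_card v), ?_⟩
      rw [T.iterate_level_spec v]
      rw [show k = (k - T.level v) + T.level v by omega, Function.iterate_add_apply,
        T.iterate_level_spec v, T.iterate_root] at hk
      exact hk.symm ▸ rfl

lemma isAncestor_refl (v : V) : T.IsAncestor v v := T.isAncestor_iff.mpr ⟨0, rfl⟩

lemma isAncestor_root (v : V) : T.IsAncestor T.root v :=
  T.isAncestor_iff.mpr ⟨T.level v, T.iterate_level_spec v⟩

lemma isAncestor_parent (v : V) : T.IsAncestor (T.parent v) v :=
  T.isAncestor_iff.mpr ⟨1, rfl⟩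

lemma level_le_of_isAncestor {u v : V} (h : T.IsAncestor u v) : T.level u ≤ T.level v := by
  obtain ⟨k, hk⟩ := T.isAncestor_iff.mp h
  rw [← hk, T.level_iterate]
  omega

lemma eq_of_isAncestor_of_level_le {u v : V} (h : T.IsAncestor u v)
    (hl : T.level v ≤ T.level u) : u = v := by
  obtain ⟨k, hk⟩ := T.isAncestor_iff.mp h
  have hlev := T.level_iterate k v
  rw [hk] at hlev
  rcases le_or_gt k (T.level v) with hc | hc
  · have hk0 : k = 0 ∨ T.level v = 0 := by omega
    rcases hk0 with rfl | h0
    · exact hk.symm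
    · have hv : v = T.root := T.eq_root_of_level_eq_zero h0
      subst hv
      rw [T.iterate_root] at hk
      exact hk.symm
  · have hu : T.level u = 0 := by omega
    have huv : T.level v = 0 := by omega
    rw [T.eq_root_of_level_eq_zero hu, T.eq_root_of_level_eq_zero huv]

lemma isAncestor_trans {u v w : V} (h1 : T.IsAncestor u v) (h2 : T.IsAncestor v w) :
    T.IsAncestor u w := by
  obtain ⟨j, hj⟩ := T.isAncestor_iff.mp h1
  obtain ⟨k, hk⟩ := T.isAncestor_iff.mp h2
  exact T.isAncestor_iff.mpr ⟨j + k, by rw [Function.iterate_add_apply, hk, hj]⟩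

lemma isAncestor_total_of_common {u w v : V} (hu : T.IsAncestor u v) (hw : T.IsAncestor w v) :
    T.IsAncestor u w ∨ T.IsAncestor w u := by
  obtain ⟨j, hj⟩ := T.isAncestor_iff.mp hu
  obtain ⟨k, hk⟩ := T.isAncestor_iff.mp hw
  rcases le_total j k with h | h
  · right
    refine T.isAncestor_iff.mpr ⟨k - j, ?_⟩
    rw [← hj, ← Function.iterate_add_apply, show k - j + j = k by omega, hk]
  · left
    refine T.isAncestor_iff.mpr ⟨j - k, ?_⟩
    rw [← hk, ← Function.iterate_add_apply, show j - k + k = j by omega, hj]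

lemma eq_of_common_of_level_eq {u w v : V} (hu : T.IsAncestor u v) (hw : T.IsAncestor w v)
    (h : T.level u = T.level w) : u = w := by
  rcases T.isAncestor_total_of_common hu hw with h' | h'
  · exact T.eq_of_isAncestor_of_level_le h' (le_of_eq h.symm)
  · exact (T.eq_of_isAncestor_of_level_le h' (le_of_eq h)).symm

lemma not_isLeaf_of_parent {u v : V} (h : T.parent u = v) (hne : u ≠ v) : ¬ T.IsLeaf v :=
  fun hl => hne (hl u h)

lemma eq_of_isLeaf_isAncestor {u v : V} (hl : T.IsLeaf u) (h : T.IsAncestor u v) : u = v := by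
  obtain ⟨k, hk⟩ := T.isAncestor_iff.mp h
  clear h
  induction k generalizing v with
  | zero => exact hk.symm
  | succ k ih =>
    rw [Function.iterate_succ_apply] at hk
    have h1 : u = T.parent v := ih hk
    exact (hl v h1.symm).symm

lemma eq_root_of_isLeaf_root (hl : T.IsLeaf T.root) (v : V) : v = T.root := by
  by_contra hv
  have h1 : 1 ≤ T.level v := by
    rcases Nat.eq_zero_or_pos (T.level v) with h | h
    · exact absurd (T.eq_root_of_level_eq_zero h) hv
    · exact h
  have h2 : T.parent (T.parent^[T.level v - 1] v) = T.root := by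
    have h2' := T.iterate_level_spec v
    rw [show T.level v = (T.level v - 1) + 1 by omega, Function.iterate_succ_apply'] at h2'
    exact h2'
  have h3 := hl _ h2
  have h4 := T.level_iterate (T.level v - 1) v
  rw [h3, T.level_root] at h4
  omega

lemma not_isLeaf_iterate (v : V) {i : ℕ} (h1 : 1 ≤ i) (h2 : i ≤ T.level v) :
    ¬ T.IsLeaf (T.parent^[i] v) := by
  apply T.not_isLeaf_of_parent (u := T.parent^[i-1] v)
  · conv_rhs => rw [show i = (i - 1) + 1 by omega, Function.iterate_succ_apply']
  · intro h
    have ha := T.level_iterate (i - 1) v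
    have hb := T.level_iterate i v
    rw [h, hb] at ha
    omega

end TreeOn

namespace TreeOn

variable {V : Type} [Fintype V] [DecidableEq V] (T : TreeOn V)

lemma childCount_leaf {v : V} (hv : T.IsLeaf v) : T.childCount v = 0 := by
  rw [childCount, Finset.card_eq_zero, Finset.filter_eq_empty_iff]
  rintro u - ⟨h1, h2⟩
  exact h2 (hv u h1)

lemma sum_childCount : ∑ v, T.childCount v = Fintype.card V - 1 := by
  have key : (Finset.univ.filter fun u : V => u ≠ T.root).card
      = ∑ v, ((Finset.univ.filter fun u : V => u ≠ T.root).filter fun u => T.parent u = v).card :=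
    Finset.card_eq_sum_card_fiberwise (fun x _ => Finset.mem_univ _)
  have h1 : ∀ v : V, ((Finset.univ.filter fun u : V => u ≠ T.root).filter
      fun u => T.parent u = v).card = T.childCount v := by
    intro v
    rw [childCount]
    congr 1
    ext u
    simp only [Finset.mem_filter, Finset.mem_univ, true_and]
    constructor
    · rintro ⟨h1, h2⟩
      refine ⟨h2, fun h => ?_⟩
      subst h
      exact h1 (T.eq_root_of_parent_eq h2)
    · rintro ⟨h1, h2⟩
      refine ⟨fun h => ?_, h1⟩
      subst h
      rw [T.parent_root] at h1
      exact h2 h1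
  have h2 : (Finset.univ.filter fun u : V => u ≠ T.root).card = Fintype.card V - 1 := by
    rw [Finset.filter_ne', Finset.card_erase_of_mem (Finset.mem_univ _), Finset.card_univ]
  rw [← h2, key]
  exact Finset.sum_congr rfl fun v _ => (h1 v).symm

lemma card_internal (hbc : ∀ v, ¬ T.IsLeaf v → T.childCount v = 2) :
    (Finset.univ.filter fun v : V => ¬ T.IsLeaf v).card + 1 = Fintype.card T.Leaf := by
  have hsum := T.sum_childCount
  rw [← Finset.sum_filter_add_sum_filter_not Finset.univ (fun v => T.IsLeaf v)] at hsum
  have hz : ∑ v ∈ Finset.univ.filter (fun v => T.IsLeaf v), T.childCount v = 0 :=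
    Finset.sum_eq_zero fun v hv => T.childCount_leaf (Finset.mem_filter.mp hv).2
  have h2 : ∑ v ∈ Finset.univ.filter (fun v => ¬ T.IsLeaf v), T.childCount v
      = 2 * (Finset.univ.filter fun v : V => ¬ T.IsLeaf v).card := by
    rw [Finset.sum_congr rfl fun v hv => hbc v (Finset.mem_filter.mp hv).2]
    rw [Finset.sum_const, smul_eq_mul, mul_comm]
  rw [hz, zero_add, h2] at hsum
  have hpart : (Finset.univ.filter fun v : V => T.IsLeaf v).card
      + (Finset.univ.filter fun v : V => ¬ T.IsLeaf v).card = Fintype.card V :=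
    Finset.card_filter_add_card_filter_not _
  have hleafcard : Fintype.card T.Leaf = (Finset.univ.filter fun v : V => T.IsLeaf v).card :=
    Fintype.card_subtype _
  have hVpos : 1 ≤ Fintype.card V := Fintype.card_pos_iff.mpr ⟨T.root⟩
  omega

end TreeOn

namespace TreeOn

variable {V : Type} [Fintype V] [DecidableEq V] (T : TreeOn V)

/-- Internal vertices are determined by their level (given the caterpillar property). -/
lemma internal_level_injective (hcat : T.IsCaterpillar) {v w : V}
    (hv : ¬ T.IsLeaf v) (hw : ¬ T.IsLeaf w) (h : T.level v = T.level w) : v = w := by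
  rcases hcat v w hv hw with h' | h'
  · exact T.eq_of_isAncestor_of_level_le h' (le_of_eq h.symm)
  · exact (T.eq_of_isAncestor_of_level_le h' (le_of_eq h)).symm

lemma downward_closed_eq_range {S : Finset ℕ} {c : ℕ}
    (hdc : ∀ m ∈ S, ∀ j ≤ m, j ∈ S) (hcard : S.card = c) : S = Finset.range c := by
  have hsub : S ⊆ Finset.range c := by
    intro m hm
    rw [Finset.mem_range]
    by_contra hmc
    push_neg at hmc
    have : Finset.range (m + 1) ⊆ S := by
      intro j hj
      have hj' := Finset.mem_range.mp hj
      exact hdc m hm j (by omega)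
    have := Finset.card_le_card this
    rw [Finset.card_range] at this
    omega
  exact Finset.eq_of_subset_of_card_le hsub (by rw [Finset.card_range, hcard])

/-- The set of levels of internal vertices is `{0, ..., n-2}`. -/
lemma internal_levels (hcat : T.IsCaterpillar) (hbc : ∀ v, ¬ T.IsLeaf v → T.childCount v = 2)
    {n : ℕ} (hcard : Fintype.card T.Leaf = n) :
    (Finset.univ.filter fun v : V => ¬ T.IsLeaf v).image T.level = Finset.range (n - 1) := by
  apply downward_closed_eq_range
  · intro m hm j hj
    rw [Finset.mem_image] at hm ⊢
    obtain ⟨v, hv, hlv⟩ := hm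
    rw [Finset.mem_filter] at hv
    refine ⟨T.parent^[m - j] v, Finset.mem_filter.mpr ⟨Finset.mem_univ _, ?_⟩, ?_⟩
    · rcases Nat.eq_zero_or_pos (m - j) with h0 | h0
      · rw [h0, Function.iterate_zero_apply]; exact hv.2
      · exact T.not_isLeaf_iterate v h0 (by omega)
    · rw [T.level_iterate, hlv]; omega
  · have hinj : Set.InjOn T.level ↑(Finset.univ.filter fun v : V => ¬ T.IsLeaf v) := by
      intro v hv w hw h
      rw [Finset.coe_filter] at hv hw
      exact T.internal_level_injective hcat hv.2 hw.2 h
    rw [Finset.card_image_of_injOn hinj]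
    have := T.card_internal hbc
    omega

lemma internal_level_lt (hcat : T.IsCaterpillar) (hbc : ∀ v, ¬ T.IsLeaf v → T.childCount v = 2)
    {n : ℕ} (hcard : Fintype.card T.Leaf = n) {v : V} (hv : ¬ T.IsLeaf v) :
    T.level v < n - 1 := by
  have := T.internal_levels hcat hbc hcard
  have hmem : T.level v ∈ (Finset.univ.filter fun v : V => ¬ T.IsLeaf v).image T.level :=
    Finset.mem_image_of_mem _ (Finset.mem_filter.mpr ⟨Finset.mem_univ _, hv⟩)
  rw [this, Finset.mem_range] at hmem
  exact hmem

lemma exists_internal (hcat : T.IsCaterpillar) (hbc : ∀ v, ¬ T.IsLeaf v → T.childCount v = 2)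
    {n : ℕ} (hcard : Fintype.card T.Leaf = n) {m : ℕ} (hm : m < n - 1) :
    ∃ v : V, ¬ T.IsLeaf v ∧ T.level v = m := by
  have := T.internal_levels hcat hbc hcard
  have hmem : m ∈ Finset.range (n - 1) := Finset.mem_range.mpr hm
  rw [← this, Finset.mem_image] at hmem
  obtain ⟨v, hv, hlv⟩ := hmem
  exact ⟨v, (Finset.mem_filter.mp hv).2, hlv⟩

end TreeOn

namespace TreeOn

variable {V : Type} [Fintype V] [DecidableEq V] (T : TreeOn V)

lemma root_not_isLeaf {n : ℕ} (hcard : Fintype.card T.Leaf = n) (hn : 2 ≤ n) :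
    ¬ T.IsLeaf T.root := by
  intro hl
  have h1 : Fintype.card T.Leaf = 1 :=
    Fintype.card_eq_one_iff.mpr ⟨⟨T.root, hl⟩,
      fun x => Subtype.ext (T.eq_root_of_isLeaf_root hl x.1)⟩
  omega

lemma leaf_level_pos {n : ℕ} (hcard : Fintype.card T.Leaf = n) (hn : 2 ≤ n) {v : V}
    (hv : T.IsLeaf v) : 1 ≤ T.level v := by
  rcases Nat.eq_zero_or_pos (T.level v) with h | h
  · exact absurd (T.eq_root_of_level_eq_zero h ▸ hv) (T.root_not_isLeaf hcard hn)
  · exact h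

lemma card_leaves_at_level (hcat : T.IsCaterpillar)
    (hbc : ∀ v, ¬ T.IsLeaf v → T.childCount v = 2)
    {n : ℕ} (hcard : Fintype.card T.Leaf = n) (hn : 2 ≤ n) {ℓ : ℕ} (h1 : 1 ≤ ℓ)
    (h2 : ℓ ≤ n - 1) :
    (Finset.univ.filter fun v : V => T.IsLeaf v ∧ T.level v = ℓ).card
      = if ℓ < n - 1 then 1 else 2 := by
  obtain ⟨u, hu, hul⟩ := T.exists_internal hcat hbc hcard (m := ℓ - 1) (by omega)
  set s : Finset V := Finset.univ.filter fun w => T.parent w = u ∧ w ≠ u with hs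
  have hchild : s.card = 2 := hbc u hu
  have hpartition :=
    Finset.card_filter_add_card_filter_not (s := s) (p := fun w => T.IsLeaf w)
  have hLeq : (Finset.univ.filter fun v : V => T.IsLeaf v ∧ T.level v = ℓ)
      = s.filter fun w => T.IsLeaf w := by
    ext v
    simp only [hs, Finset.mem_filter, Finset.mem_univ, true_and]
    constructor
    · rintro ⟨hvl, hvlev⟩
      have hvr : v ≠ T.root := by
        intro h; rw [h, T.level_root] at hvlev; omega
      have hpv : v ≠ T.parent v := fun h => hvr (T.eq_root_of_parent_eq h.symm)
      have hpint : ¬ T.IsLeaf (T.parent v) := T.not_isLeaf_of_parent rfl hpv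
      have hplev : T.level (T.parent v) = ℓ - 1 := by
        have := T.level_parent hvr; omega
      have hpu : T.parent v = u :=
        T.internal_level_injective hcat hpint hu (by rw [hplev, hul])
      exact ⟨⟨hpu, fun h => hu (h ▸ hvl)⟩, hvl⟩
    · rintro ⟨⟨hpu, hvu⟩, hv2⟩
      refine ⟨hv2, ?_⟩
      have hvr : v ≠ T.root := by
        intro h
        subst h
        rw [T.parent_root] at hpu
        exact hvu hpu
      have := T.level_parent hvr
      rw [hpu, hul] at this
      omega
  have hIcard : (s.filter fun w => ¬ T.IsLeaf w).card = if ℓ < n - 1 then 1 else 0 := by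
    split_ifs with hlt
    · obtain ⟨w₀, hw₀, hw₀l⟩ := T.exists_internal hcat hbc hcard (m := ℓ) hlt
      rw [Finset.card_eq_one]
      refine ⟨w₀, ?_⟩
      ext w
      simp only [hs, Finset.mem_filter, Finset.mem_univ, true_and, Finset.mem_singleton]
      constructor
      · rintro ⟨⟨hpw, hwu⟩, hwint⟩
        have hwr : w ≠ T.root := by
          intro h
          subst h
          rw [T.parent_root] at hpw
          exact hwu hpw
        have hlw := T.level_parent hwr
        rw [hpw, hul] at hlw
        exact T.internal_level_injective hcat hwint hw₀ (by rw [hw₀l]; omega)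
      · rintro rfl
        have hwr : w ≠ T.root := by
          intro h; rw [h, T.level_root] at hw₀l; omega
        have hpv : w ≠ T.parent w := fun h => hwr (T.eq_root_of_parent_eq h.symm)
        have hpint : ¬ T.IsLeaf (T.parent w) := T.not_isLeaf_of_parent rfl hpv
        have hplev : T.level (T.parent w) = ℓ - 1 := by
          have := T.level_parent hwr; omega
        have hpu : T.parent w = u :=
          T.internal_level_injective hcat hpint hu (by rw [hplev, hul])
        refine ⟨⟨hpu, fun h => ?_⟩, hw₀⟩
        rw [h, hul] at hw₀l
        omega
    · rw [Finset.card_eq_zero, Finset.filter_eq_empty_iff]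
      intro w hw hwint
      rw [hs, Finset.mem_filter] at hw
      obtain ⟨-, hpw, hwu⟩ := hw
      have hwr : w ≠ T.root := by
        intro h
        subst h
        rw [T.parent_root] at hpw
        exact hwu hpw
      have hlw := T.level_parent hwr
      rw [hpw, hul] at hlw
      have := T.internal_level_lt hcat hbc hcard hwint
      omega
  rw [hLeq]
  split_ifs at hIcard ⊢ with hlt <;> omega

end TreeOn

namespace TreeOn

variable {V : Type} [Fintype V] [DecidableEq V] (T : TreeOn V)

lemma lcaLevel_self (v : V) : T.lcaLevel v v = T.level v := by
  apply le_antisymm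
  · apply Finset.sup_le
    intro u hu
    exact T.level_le_of_isAncestor (Finset.mem_filter.mp hu).2.1
  · exact Finset.le_sup (f := T.level)
      (Finset.mem_filter.mpr ⟨Finset.mem_univ _, T.isAncestor_refl v, T.isAncestor_refl v⟩)

lemma lcaLevel_distinct_leaves (hcat : T.IsCaterpillar)
    (hbc : ∀ v, ¬ T.IsLeaf v → T.childCount v = 2)
    {n : ℕ} (hcard : Fintype.card T.Leaf = n) (hn : 2 ≤ n) {v w : V}
    (hv : T.IsLeaf v) (hw : T.IsLeaf w) (hvw : v ≠ w) :
    T.lcaLevel v w = min (T.level v) (T.level w) - 1 := by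
  have hv1 : 1 ≤ T.level v := T.leaf_level_pos hcard hn hv
  have hw1 : 1 ≤ T.level w := T.leaf_level_pos hcard hn hw
  -- parents are internal
  have hvr : v ≠ T.root := fun h => by rw [h, T.level_root] at hv1; omega
  have hwr : w ≠ T.root := fun h => by rw [h, T.level_root] at hw1; omega
  have hpv : v ≠ T.parent v := fun h => hvr (T.eq_root_of_parent_eq h.symm)
  have hpw : w ≠ T.parent w := fun h => hwr (T.eq_root_of_parent_eq h.symm)
  have hpvint : ¬ T.IsLeaf (T.parent v) := T.not_isLeaf_of_parent rfl hpv
  have hpvlt : T.level (T.parent v) < n - 1 := T.internal_level_lt hcat hbc hcard hpvint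
  have hpvlev := T.level_parent hvr
  apply le_antisymm
  · apply Finset.sup_le
    intro u hu
    obtain ⟨-, huv, huw⟩ := Finset.mem_filter.mp hu
    have hunv : u ≠ v := fun h => hvw (T.eq_of_isLeaf_isAncestor hv (h ▸ huw))
    have hunw : u ≠ w := fun h => hvw (T.eq_of_isLeaf_isAncestor hw (h ▸ huv)).symm
    have h1 : T.level u ≤ T.level v - 1 := by
      obtain ⟨k, hk⟩ := T.isAncestor_iff.mp huv
      have hk1 : k ≠ 0 := by rintro rfl; exact hunv hk.symm
      have := T.level_iterate k v
      rw [hk] at this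
      omega
    have h2 : T.level u ≤ T.level w - 1 := by
      obtain ⟨k, hk⟩ := T.isAncestor_iff.mp huw
      have hk1 : k ≠ 0 := by rintro rfl; exact hunw hk.symm
      have := T.level_iterate k w
      rw [hk] at this
      omega
    omega
  · set m := min (T.level v) (T.level w) - 1 with hm
    have hmv : 1 ≤ T.level v - m ∧ T.level v - m ≤ T.level v := by omega
    have hmw : 1 ≤ T.level w - m ∧ T.level w - m ≤ T.level w := by omega
    set x := T.parent^[T.level v - m] v with hx
    set y := T.parent^[T.level w - m] w with hy
    have hxint : ¬ T.IsLeaf x := T.not_isLeaf_iterate v hmv.1 hmv.2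
    have hyint : ¬ T.IsLeaf y := T.not_isLeaf_iterate w hmw.1 hmw.2
    have hxl : T.level x = m := by rw [hx, T.level_iterate]; omega
    have hyl : T.level y = m := by rw [hy, T.level_iterate]; omega
    have hxy : x = y := T.internal_level_injective hcat hxint hyint (by rw [hxl, hyl])
    have hxv : T.IsAncestor x v := T.isAncestor_iff.mpr ⟨_, hx.symm⟩
    have hxw : T.IsAncestor x w := by rw [hxy]; exact T.isAncestor_iff.mpr ⟨_, hy.symm⟩
    have hmem : x ∈ Finset.univ.filter fun u => T.IsAncestor u v ∧ T.IsAncestor u w :=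
      Finset.mem_filter.mpr ⟨Finset.mem_univ _, hxv, hxw⟩
    calc m = T.level x := hxl.symm
    _ ≤ _ := Finset.le_sup (f := T.level) hmem

/-- Master structural lemma: the leaves of a binary caterpillar can be indexed
so that the ancestral matrix takes the standard form. -/
lemma exists_leaf_indexing (hbc : T.IsBinaryCaterpillar) {n : ℕ} (hn : 1 ≤ n)
    (hcard : Fintype.card T.Leaf = n) :
    ∃ φ : Fin n → T.Leaf, Function.Bijective φ ∧
      ∀ i j : Fin n, T.lcaLevel (φ i).1 (φ j).1
        = if i = j then min (i.val + 1) (n - 1) else min i.val j.val := by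
  obtain ⟨hcat, hcc⟩ := hbc
  rcases eq_or_lt_of_le hn with h1 | hn2
  · -- n = 1
    have hroot : T.IsLeaf T.root := by
      by_contra hr
      have h2 := T.card_internal hcc
      have h3 : 0 < (Finset.univ.filter fun v : V => ¬ T.IsLeaf v).card :=
        Finset.card_pos.mpr ⟨T.root, Finset.mem_filter.mpr ⟨Finset.mem_univ _, hr⟩⟩
      omega
    refine ⟨fun _ => ⟨T.root, hroot⟩, ?_, ?_⟩
    · rw [Fintype.bijective_iff_injective_and_card]
      exact ⟨fun a b _ => Fin.ext (by omega), by rw [hcard, Fintype.card_fin]⟩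
    · intro i j
      have hij : i = j := by omega
      subst hij
      rw [if_pos rfl, T.lcaLevel_self, T.level_root]
      have : i.val = 0 := by omega
      rw [this]
      omega
  · -- n ≥ 2
    have huniq : ∀ v w : V, T.IsLeaf v → T.IsLeaf w → T.level v = T.level w →
        T.level v < n - 1 → v = w := by
      intro v w hv hw hlev hlt
      have hv1 : 1 ≤ T.level v := T.leaf_level_pos hcard hn2 hv
      have hc := T.card_leaves_at_level hcat hcc hcard hn2 hv1 (le_of_lt hlt)
      rw [if_pos hlt] at hc
      have hmv : v ∈ Finset.univ.filter fun u : V => T.IsLeaf u ∧ T.level u = T.level v :=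
        Finset.mem_filter.mpr ⟨Finset.mem_univ _, hv, rfl⟩
      have hmw : w ∈ Finset.univ.filter fun u : V => T.IsLeaf u ∧ T.level u = T.level v :=
        Finset.mem_filter.mpr ⟨Finset.mem_univ _, hw, hlev.symm⟩
      exact Finset.card_le_one.mp (le_of_eq hc) v hmv w hmw
    have hex : ∀ ℓ : ℕ, 1 ≤ ℓ → ℓ < n - 1 → ∃ v : V, T.IsLeaf v ∧ T.level v = ℓ := by
      intro ℓ hℓ1 hℓ2
      have hc := T.card_leaves_at_level hcat hcc hcard hn2 hℓ1 (le_of_lt hℓ2)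
      rw [if_pos hℓ2] at hc
      have hpos : 0 < (Finset.univ.filter fun v : V => T.IsLeaf v ∧ T.level v = ℓ).card := by
        omega
      obtain ⟨v, hv⟩ := Finset.card_pos.mp hpos
      exact ⟨v, (Finset.mem_filter.mp hv).2⟩
    have htop : ∃ a b : V, a ≠ b ∧ (T.IsLeaf a ∧ T.level a = n - 1)
        ∧ (T.IsLeaf b ∧ T.level b = n - 1) := by
      have hc := T.card_leaves_at_level hcat hcc hcard hn2 (ℓ := n - 1) (by omega) le_rfl
      rw [if_neg (lt_irrefl _)] at hc
      obtain ⟨a, b, hab, hset⟩ := Finset.card_eq_two.mp hc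
      have ha : a ∈ Finset.univ.filter fun v : V => T.IsLeaf v ∧ T.level v = n - 1 := by
        rw [hset]; exact Finset.mem_insert_self _ _
      have hb : b ∈ Finset.univ.filter fun v : V => T.IsLeaf v ∧ T.level v = n - 1 := by
        rw [hset]; exact Finset.mem_insert_of_mem (Finset.mem_singleton_self _)
      exact ⟨a, b, hab, (Finset.mem_filter.mp ha).2, (Finset.mem_filter.mp hb).2⟩
    obtain ⟨a, b, hab, ⟨hal, halev⟩, ⟨hbl, hblev⟩⟩ := htop
    set ψ : Fin n → V := fun i =>
      if (i : ℕ) = n - 1 then b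
      else if (i : ℕ) = n - 2 then a
      else if h : 1 ≤ (i : ℕ) + 1 ∧ (i : ℕ) + 1 < n - 1 then (hex _ h.1 h.2).choose
      else T.root with hψ
    have hψb : ∀ i : Fin n, (i : ℕ) = n - 1 → ψ i = b := by
      intro i h; simp [hψ, h]
    have hψa : ∀ i : Fin n, (i : ℕ) = n - 2 → ψ i = a := by
      intro i h
      rw [hψ]
      simp only []
      rw [if_neg (by omega), if_pos h]
    have hψc : ∀ i : Fin n, (i : ℕ) < n - 2 →
        T.IsLeaf (ψ i) ∧ T.level (ψ i) = (i : ℕ) + 1 := by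
      intro i h
      have hcond : 1 ≤ (i : ℕ) + 1 ∧ (i : ℕ) + 1 < n - 1 := by omega
      have : ψ i = (hex _ hcond.1 hcond.2).choose := by
        rw [hψ]
        simp only []
        rw [if_neg (by omega), if_neg (by omega), dif_pos hcond]
      rw [this]
      exact (hex _ hcond.1 hcond.2).choose_spec
    have hψleaf : ∀ i : Fin n, T.IsLeaf (ψ i) := by
      intro i
      rcases lt_trichotomy (i : ℕ) (n - 2) with h | h | h
      · exact (hψc i h).1
      · rw [hψa i h]; exact hal
      · have : (i : ℕ) = n - 1 := by have := i.isLt; omega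
        rw [hψb i this]; exact hbl
    have hψlevel : ∀ i : Fin n, T.level (ψ i) = min ((i : ℕ) + 1) (n - 1) := by
      intro i
      rcases lt_trichotomy (i : ℕ) (n - 2) with h | h | h
      · rw [(hψc i h).2]; omega
      · rw [hψa i h, halev]; omega
      · have h' : (i : ℕ) = n - 1 := by have := i.isLt; omega
        rw [hψb i h', hblev]; omega
    have hψinj : Function.Injective ψ := by
      intro i j hij
      have hlev : min ((i : ℕ) + 1) (n - 1) = min ((j : ℕ) + 1) (n - 1) := by
        rw [← hψlevel i, ← hψlevel j, hij]
      by_contra hne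
      have hvne : (i : ℕ) ≠ (j : ℕ) := fun h => hne (Fin.ext h)
      have hi := i.isLt
      have hj := j.isLt
      -- either both indices are in {n-2, n-1}, or levels differ
      have hcases : ((i : ℕ) = n - 2 ∧ (j : ℕ) = n - 1) ∨ ((i : ℕ) = n - 1 ∧ (j : ℕ) = n - 2) := by
        omega
      rcases hcases with ⟨h1, h2⟩ | ⟨h1, h2⟩
      · rw [hψa i h1, hψb j h2] at hij; exact hab hij
      · rw [hψb i h1, hψa j h2] at hij; exact hab hij.symm
    set φ : Fin n → T.Leaf := fun i => ⟨ψ i, hψleaf i⟩ with hφ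
    have hφinj : Function.Injective φ := fun i j h => hψinj (congrArg Subtype.val h)
    refine ⟨φ, ?_, ?_⟩
    · rw [Fintype.bijective_iff_injective_and_card]
      exact ⟨hφinj, by rw [hcard, Fintype.card_fin]⟩
    · intro i j
      rcases eq_or_ne i j with rfl | hij
      · rw [if_pos rfl, T.lcaLevel_self, hψlevel]
      · rw [if_neg hij]
        have hne : ψ i ≠ ψ j := fun h => hij (hψinj h)
        rw [T.lcaLevel_distinct_leaves hcat hcc hcard hn2 (hψleaf i) (hψleaf j) hne,
          hψlevel i, hψlevel j]
        have hi := i.isLt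
        have hj := j.isLt
        have hvne : (i : ℕ) ≠ (j : ℕ) := fun h => hij (Fin.ext h)
        omega

end TreeOn
open Matrix Polynomial

noncomputable def Bmat (k : ℕ) : Matrix (Fin k) (Fin k) ℝ[X] :=
  Matrix.of fun i j => if i = j then X - ((i.val + 1 : ℕ) : ℝ[X]) else -((min i.val j.val : ℕ) : ℝ[X])

noncomputable def Amat (n : ℕ) : Matrix (Fin n) (Fin n) ℝ[X] :=
  Matrix.of fun i j =>
    if i = j then X - ((min (i.val + 1) (n - 1) : ℕ) : ℝ[X]) else -((min i.val j.val : ℕ) : ℝ[X])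

lemma Amat_apply_eq {n : ℕ} (i : Fin n) :
    Amat n i i = X - ((min (i.val + 1) (n - 1) : ℕ) : ℝ[X]) := if_pos rfl

lemma Amat_apply_ne {n : ℕ} {i j : Fin n} (h : i ≠ j) :
    Amat n i j = -((min i.val j.val : ℕ) : ℝ[X]) := if_neg h

lemma Bmat_apply_eq {k : ℕ} (i : Fin k) :
    Bmat k i i = X - ((i.val + 1 : ℕ) : ℝ[X]) := if_pos rfl

lemma Bmat_apply_ne {k : ℕ} {i j : Fin k} (h : i ≠ j) :
    Bmat k i j = -((min i.val j.val : ℕ) : ℝ[X]) := if_neg h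

lemma Amat_sub_castSucc (k : ℕ) :
    (Amat (k + 1)).submatrix Fin.castSucc Fin.castSucc = Bmat k := by
  ext i j : 2
  simp only [Amat, Bmat, submatrix_apply, Matrix.of_apply, Fin.castSucc_inj, Fin.coe_castSucc]
  rcases eq_or_ne i j with rfl | h
  · rw [if_pos rfl, if_pos rfl, Nat.add_sub_cancel, min_eq_left (by omega)]
  · simp [h]

lemma main_rec (k : ℕ) :
    (Amat (k + 2)).det =
      (2 * X - 2) * (Bmat (k + 1)).det - (X - 1) ^ 2 * (Bmat k).det := by
  set r : Fin (k + 2) := Fin.last (k + 1) with hr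
  set p : Fin (k + 2) := (Fin.last k).castSucc with hp
  have hrv : (r : ℕ) = k + 1 := rfl
  have hpv : (p : ℕ) = k := rfl
  have hrp : r ≠ p := by
    intro h; have := congrArg Fin.val h; rw [hrv, hpv] at this; omega
  set A1 : Matrix (Fin (k+2)) (Fin (k+2)) ℝ[X] :=
    (Amat (k+2)).updateRow r ((Amat (k+2)) r + (-1 : ℝ[X]) • (Amat (k+2)) p) with hA1
  set A2 : Matrix (Fin (k+2)) (Fin (k+2)) ℝ[X] :=
    A1.updateCol r (fun i => A1 i r + (-1 : ℝ[X]) • A1 i p) with hA2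
  have hdet1 : A1.det = (Amat (k+2)).det := Matrix.det_updateRow_add_smul_self _ hrp _
  have hdet2 : A2.det = A1.det := Matrix.det_updateCol_add_smul_self _ hrp _
  -- entries of A1 on row r
  have hA1r : ∀ j : Fin (k+2), A1 r j = Amat (k+2) r j - Amat (k+2) p j := by
    intro j
    rw [hA1, updateRow_self]
    simp only [Pi.add_apply, Pi.smul_apply, smul_eq_mul]
    ring
  have hA1ne : ∀ (i : Fin (k+2)), i ≠ r → ∀ j, A1 i j = Amat (k+2) i j := by
    intro i hi j; rw [hA1, updateRow_ne hi]
  -- key entry values of A1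
  have hA1rp : A1 r p = 1 - X := by
    rw [hA1r, Amat_apply_ne hrp, Amat_apply_eq]
    rw [show min (r.val) (p.val) = k by rw [hrv, hpv]; omega,
      show min (p.val + 1) (k + 2 - 1) = k + 1 by rw [hpv]; omega]
    push_cast; ring
  have hA1rr : A1 r r = X - 1 := by
    rw [hA1r, Amat_apply_eq, Amat_apply_ne (Ne.symm hrp)]
    rw [show min (r.val + 1) (k + 2 - 1) = k + 1 by rw [hrv]; omega,
      show min (p.val) (r.val) = k by rw [hrv, hpv]; omega]
    push_cast; ring
  have hA1rz : ∀ j : Fin (k+2), j ≠ r → j ≠ p → A1 r j = 0 := by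
    intro j hjr hjp
    have hjv : j.val < k := by
      have := j.isLt
      have h1 : j.val ≠ k + 1 := fun h => hjr (Fin.ext (by rw [hrv, h]))
      have h2 : j.val ≠ k := fun h => hjp (Fin.ext (by rw [hpv, h]))
      omega
    rw [hA1r, Amat_apply_ne (Ne.symm hjr), Amat_apply_ne (Ne.symm hjp)]
    rw [show min (r.val) (j.val) = j.val by rw [hrv]; omega,
      show min (p.val) (j.val) = j.val by rw [hpv]; omega]
    ring
  -- entries of A2
  have hA2r : ∀ i : Fin (k+2), A2 i r = A1 i r - A1 i p := by
    intro i
    rw [hA2, updateCol_self]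
    simp only [smul_eq_mul]
    ring
  have hA2ne : ∀ (i : Fin (k+2)) {j}, j ≠ r → A2 i j = A1 i j := by
    intro i j hj; rw [hA2, updateCol_ne hj]
  have hA2rr : A2 r r = 2 * X - 2 := by
    rw [hA2r, hA1rr, hA1rp]; ring
  have hA2rp : A2 r p = 1 - X := by rw [hA2ne _ (Ne.symm hrp), hA1rp]
  have hA2ir0 : ∀ i : Fin (k+2), i ≠ r → i ≠ p → A2 i r = 0 := by
    intro i hir hip
    have hiv : i.val < k := by
      have := i.isLt
      have h1 : i.val ≠ k + 1 := fun h => hir (Fin.ext (by rw [hrv, h]))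
      have h2 : i.val ≠ k := fun h => hip (Fin.ext (by rw [hpv, h]))
      omega
    rw [hA2r, hA1ne _ hir, hA1ne _ hir, Amat_apply_ne hir, Amat_apply_ne hip]
    rw [show min (i.val) (r.val) = i.val by rw [hrv]; omega,
      show min (i.val) (p.val) = i.val by rw [hpv]; omega]
    ring
  have hA2pr : A2 p r = 1 - X := by
    rw [hA2r, hA1ne _ (Ne.symm hrp), hA1ne _ (Ne.symm hrp), Amat_apply_ne (Ne.symm hrp),
      Amat_apply_eq]
    rw [show min (p.val) (r.val) = k by rw [hrv, hpv]; omega,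
      show min (p.val + 1) (k + 2 - 1) = k + 1 by rw [hpv]; omega]
    push_cast; ring
  have hrs : r.succAbove = Fin.castSucc := Fin.succAbove_last
  have hplast : p.succAbove (Fin.last k) = r := by
    rw [hp, Fin.succAbove_of_le_castSucc _ _ (le_refl _), Fin.succ_last, hr]
  have hcs_ne_r : ∀ i : Fin (k+1), Fin.castSucc i ≠ r := fun i => (Fin.castSucc_lt_last i).ne
  -- the two submatrix identifications
  have hS1 : A2.submatrix r.succAbove r.succAbove = Bmat (k+1) := by
    rw [hrs, ← Amat_sub_castSucc (k+1)]
    ext i j : 2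
    rw [submatrix_apply, submatrix_apply, hA2ne _ (hcs_ne_r j), hA1ne _ (hcs_ne_r i)]
  have hDp : (A2.submatrix r.succAbove p.succAbove).det = (1 - X) * (Bmat k).det := by
    rw [Matrix.det_succ_column _ (Fin.last k), Finset.sum_eq_single (Fin.last k)]
    · have hsub2 : ((A2.submatrix r.succAbove p.succAbove).submatrix
          (Fin.last k).succAbove (Fin.last k).succAbove) = Bmat k := by
        rw [submatrix_submatrix]
        funext i j
        have hrow : (r.succAbove ∘ (Fin.last k).succAbove) i = Fin.castSucc (Fin.castSucc i) := by
          simp only [Function.comp_apply, Fin.succAbove_last, hrs]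
        have hcol : (p.succAbove ∘ (Fin.last k).succAbove) j = Fin.castSucc (Fin.castSucc j) := by
          simp only [Function.comp_apply, Fin.succAbove_last]
          rw [hp, Fin.succAbove_of_castSucc_lt _ _
            (by rw [Fin.castSucc_lt_castSucc_iff]; exact Fin.castSucc_lt_last j)]
        rw [submatrix_apply, hrow, hcol, hA2ne _ (hcs_ne_r _), hA1ne _ (hcs_ne_r _)]
        rcases eq_or_ne i j with rfl | hij
        · rw [Amat_apply_eq, Bmat_apply_eq]
          rw [show min ((Fin.castSucc (Fin.castSucc i)).val + 1) (k + 2 - 1) = i.val + 1 by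
            simp only [Fin.coe_castSucc]; have := i.isLt; omega]
        · have hij' : Fin.castSucc (Fin.castSucc i) ≠ Fin.castSucc (Fin.castSucc j) := by
            simpa [Fin.castSucc_inj] using hij
          rw [Amat_apply_ne hij', Bmat_apply_ne hij]
          simp only [Fin.coe_castSucc]
      rw [hsub2, submatrix_apply, hplast, hrs]
      rw [show Fin.castSucc (Fin.last k) = p from hp.symm, hA2pr]
      have hsgn : ((-1 : ℝ[X]) ^ ((Fin.last k : ℕ) + (Fin.last k : ℕ))) = 1 :=
        Even.neg_one_pow ⟨k, by simp [Fin.val_last]⟩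
      rw [hsgn]; ring
    · intro i _ hi
      rw [submatrix_apply, hplast, hrs, hA2ir0]
      · ring
      · exact hcs_ne_r i
      · rw [hp]; simpa [Fin.castSucc_inj] using hi
    · intro h; exact absurd (Finset.mem_univ _) h
  -- final expansion along row r
  have hfin : (Amat (k+2)).det =
      ∑ j ∈ ({p, r} : Finset (Fin (k+2))),
        (-1 : ℝ[X]) ^ ((r : ℕ) + (j : ℕ)) * A2 r j *
          (A2.submatrix r.succAbove j.succAbove).det := by
    rw [← hdet1, ← hdet2, Matrix.det_succ_row A2 r]
    refine (Finset.sum_subset (Finset.subset_univ _) fun x _ hx => ?_).symm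
    simp only [Finset.mem_insert, Finset.mem_singleton, not_or] at hx
    rw [hA2ne _ hx.2, hA1rz _ hx.2 hx.1, mul_zero, zero_mul]
  rw [hfin, Finset.sum_insert (by simp [Finset.mem_singleton]; exact Ne.symm hrp),
    Finset.sum_singleton, hA2rp, hA2rr, hS1, hDp]
  have hs1 : ((-1 : ℝ[X]) ^ ((r : ℕ) + (p : ℕ))) = -1 :=
    Odd.neg_one_pow (by rw [hrv, hpv]; exact ⟨k, by omega⟩)
  have hs2 : ((-1 : ℝ[X]) ^ ((r : ℕ) + (r : ℕ))) = 1 :=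
    Even.neg_one_pow ⟨k + 1, by rw [hrv]⟩
  rw [hs1, hs2]
  ring
lemma Bmat_sub_castSucc (k : ℕ) :
    (Bmat (k + 1)).submatrix Fin.castSucc Fin.castSucc = Bmat k := by
  ext i j
  simp only [Bmat, submatrix_apply, Matrix.of_apply, Fin.castSucc_inj, Fin.coe_castSucc]

lemma QA (k : ℕ) : (Bmat (k + 1)).det = (Amat (k + 1)).det - (Bmat k).det := by
  have hA : Amat (k + 1) =
      (Bmat (k + 1)).updateRow (Fin.last k)
        ((Bmat (k + 1)) (Fin.last k) + Pi.single (Fin.last k) 1) := by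
    ext i j : 2
    rcases eq_or_ne i (Fin.last k) with rfl | hi
    · rw [updateRow_self]
      rcases eq_or_ne (Fin.last k) j with rfl | hj
      · simp only [Amat, Bmat, Matrix.of_apply, if_pos rfl, Pi.add_apply, Pi.single_eq_same,
          Fin.val_last, Nat.add_sub_cancel]
        rw [min_eq_right (by omega)]
        push_cast
        ring
      · simp only [Amat, Bmat, Matrix.of_apply, Pi.add_apply,
          Pi.single_eq_of_ne (Ne.symm hj), add_zero]
        rw [if_neg hj, if_neg hj]
    · rw [updateRow_ne hi]
      rcases eq_or_ne i j with rfl | hj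
      · simp only [Amat, Bmat, Matrix.of_apply, if_pos rfl, Nat.add_sub_cancel]
        rw [min_eq_left (by have := Fin.val_lt_last hi; omega)]
      · simp [Amat, Bmat, hj]
  have hsingle :
      ((Bmat (k + 1)).updateRow (Fin.last k) (Pi.single (Fin.last k) 1)).det = (Bmat k).det := by
    rw [Matrix.det_succ_row _ (Fin.last k)]
    rw [Finset.sum_eq_single (Fin.last k)]
    · rw [updateRow_self, Pi.single_eq_same]
      have hsub : ((Bmat (k + 1)).updateRow (Fin.last k) (Pi.single (Fin.last k) 1)).submatrix
          (Fin.last k).succAbove (Fin.last k).succAbove = Bmat k := by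
        rw [Fin.succAbove_last]
        rw [← Bmat_sub_castSucc k]
        ext i j
        rw [submatrix_apply, submatrix_apply, updateRow_ne (Fin.castSucc_lt_last i).ne]
      rw [hsub]
      have h1 : ((-1 : ℝ[X]) ^ ((Fin.last k : ℕ) + (Fin.last k : ℕ))) = 1 := by
        rw [Fin.val_last, ← two_mul, pow_mul]; norm_num
      rw [h1]; ring
    · intro j _ hj
      rw [updateRow_self, Pi.single_eq_of_ne hj]
      ring
    · intro h; exact absurd (Finset.mem_univ _) h
  rw [hA, Matrix.det_updateRow_add, Matrix.updateRow_eq_self, hsingle]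
  ring

open Polynomial in
lemma detAmat_one : (Amat 1).det = X := by
  rw [Matrix.det_fin_one, Amat_apply_eq]
  norm_num

open Polynomial in
lemma detAmat_two : (Amat 2).det = (X - 1) ^ 2 := by
  rw [Matrix.det_fin_two, Amat_apply_eq, Amat_apply_eq,
    Amat_apply_ne (show (0 : Fin 2) ≠ 1 by decide),
    Amat_apply_ne (show (1 : Fin 2) ≠ 0 by decide)]
  norm_num
  ring

open Polynomial in
lemma charpoly_eq_detAmat {V : Type} [Fintype V] [DecidableEq V] (T : TreeOn V)
    (hbc : T.IsBinaryCaterpillar) {n : ℕ} (hn : 1 ≤ n) (hcard : Fintype.card T.Leaf = n) :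
    T.ancMatrix.charpoly = (Amat n).det := by
  obtain ⟨φ, hbij, hent⟩ := T.exists_leaf_indexing hbc hn hcard
  set e : Fin n ≃ T.Leaf := Equiv.ofBijective φ hbij with he
  have h1 : T.ancMatrix.charpoly = (T.ancMatrix.submatrix e e).charpoly := by
    rw [← Matrix.charpoly_reindex e.symm T.ancMatrix, Matrix.reindex_apply, Equiv.symm_symm]
  have hφe : ∀ i : Fin n, e i = φ i := fun i => rfl
  have h2 : charmatrix (T.ancMatrix.submatrix e e) = Amat n := by
    funext i j
    have hval : (T.ancMatrix.submatrix e e) i j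
        = ((T.lcaLevel (φ i).1 (φ j).1 : ℕ) : ℝ) := rfl
    rcases eq_or_ne i j with rfl | hij
    · rw [charmatrix_apply_eq, hval, Amat_apply_eq]
      have hl := hent i i
      rw [if_pos rfl] at hl
      rw [hl, map_natCast]
    · rw [charmatrix_apply_ne _ _ _ hij, hval, Amat_apply_ne hij]
      have hl := hent i j
      rw [if_neg hij] at hl
      rw [hl, map_natCast]
  rw [h1, Matrix.charpoly, h2]

open Polynomial in
/-- Let `P_n(x) = det(xI − C(C_n))` be the characteristic
polynomial of the ancestral matrix of the binary caterpillar `C_n` (here `T n`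
is any realisation of the binary caterpillar with `n` leaves).  Then
`P_1(x) = x`, `P_2(x) = (x−1)²`, and for `n ≥ 3`,
`P_n(x) = (2x − 3)·P_{n−1}(x) − (x − 1)²·P_{n−2}(x)`. -/
theorem charpoly_binaryCaterpillar_recursion
    (Vf : ℕ → Type) [∀ n, Fintype (Vf n)] [∀ n, DecidableEq (Vf n)]
    (T : ∀ n, TreeOn (Vf n))
    (hcat : ∀ n, (T n).IsBinaryCaterpillar)
    (hleaf : ∀ n, 1 ≤ n → Fintype.card (T n).Leaf = n) :
    (T 1).ancMatrix.charpoly = X ∧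
      (T 2).ancMatrix.charpoly = (X - 1) ^ 2 ∧
      ∀ n, 3 ≤ n →
        (T n).ancMatrix.charpoly =
          (2 * X - 3) * (T (n - 1)).ancMatrix.charpoly -
            (X - 1) ^ 2 * (T (n - 2)).ancMatrix.charpoly := by
  have key : ∀ m : ℕ, 1 ≤ m → (T m).ancMatrix.charpoly = (Amat m).det :=
    fun m hm => charpoly_eq_detAmat (T m) (hcat m) hm (hleaf m hm)
  refine ⟨?_, ?_, ?_⟩
  · rw [key 1 le_rfl, detAmat_one]
  · rw [key 2 (by norm_num), detAmat_two]
  · intro n hn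
    obtain ⟨l, rfl⟩ : ∃ l, n = l + 3 := ⟨n - 3, by omega⟩
    rw [show l + 3 - 1 = l + 2 by omega, show l + 3 - 2 = l + 1 by omega,
      key (l + 3) (by omega), key (l + 2) (by omega), key (l + 1) (by omega)]
    have e1 := main_rec (l + 1)
    have e2 := main_rec l
    have e3 := QA (l + 1)
    have e4 := QA l
    rw [show l + 1 + 2 = l + 3 by omega, show l + 1 + 1 = l + 2 by omega] at e1
    rw [show l + 1 + 1 = l + 2 by omega] at e3
    linear_combination e1 + e2 + (2 * X - 2) * e3 - (X - 1) ^ 2 * e4
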